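/- arXiv:1612.02647 — 4 statements merged into one kernel-verified Lean document; each statement's English description precedes it below -/
import Mathlib

section
/- For a single square matrix M over Z_max, the spectral radius ρ(M) = lim_{n→∞} (1/n)‖M^n‖_∞ equals the maximal average weight of cycles in the graph of M: ρ(M) = max over ℓ ≥ 1 and indices i_1,…,i_ℓ of (1/ℓ)(M_{i_1,i_2} + M_{i_2,i_3} + ⋯ + M_{i_ℓ,i_1}) (with value -∞ if no cycle has finite weight). -/
open Filter

/-- The tropical (max-plus) semiring ℤ ∪ {-∞}: addition is max (lattice sup),
`+` is the tropical product with `⊥` absorbing. -/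
abbrev Zmax : Type := WithBot ℤ

/-- Square matrices over `Zmax`. -/
abbrev Mat (d : ℕ) : Type := Fin d → Fin d → Zmax

/-- Tropical matrix product: `(A⊗B) i j = max_k (A i k + B k j)`. -/
def tmul {d : ℕ} (A B : Mat d) : Mat d :=
  fun i j => Finset.univ.sup fun k => A i k + B k j

/-- Maximal entry of a matrix (`-∞` for the all-`⊥` matrix). -/
def tnorm {d : ℕ} (M : Mat d) : Zmax :=
  Finset.univ.sup fun i => Finset.univ.sup fun j => M i j

/-- Product of a list of matrices (junk value, the all-`⊥` matrix, on `[]`;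
only used on nonempty lists). -/
def prodL {d : ℕ} : List (Mat d) → Mat d
  | [] => fun _ _ => ⊥
  | [M] => M
  | M :: N :: L => tmul M (prodL (N :: L))

/-- Tropical identity matrix. -/
def tId (d : ℕ) : Mat d := fun i j => if i = j then (0 : Zmax) else ⊥

/-- Tropical matrix power. -/
def tpow {d : ℕ} (M : Mat d) : ℕ → Mat d
  | 0 => tId d
  | n+1 => tmul M (tpow M n)

/-- The subsemigroup generated by a set of matrices: all nonempty finite products. -/
def semi {d : ℕ} (Γ : Set (Mat d)) : Set (Mat d) :=
  {M | ∃ L : List (Mat d), L ≠ [] ∧ (∀ N ∈ L, N ∈ Γ) ∧ prodL L = M}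

/-- Embedding of `Zmax = ℤ ∪ {-∞}` into `EReal`. -/
noncomputable def z2e (x : Zmax) : EReal :=
  WithBot.recBotCoe ⊥ (fun n : ℤ => ((n : ℝ) : EReal)) x

/-- `minNorm Γ ℓ` is the minimum over all products of `ℓ` matrices from `Γ`
of `‖M₁⋯M_ℓ‖_∞ / ℓ`, as an extended real. -/
noncomputable def minNorm {d : ℕ} (Γ : Set (Mat d)) (ℓ : ℕ) : EReal :=
  sInf {x | ∃ L : List (Mat d), L.length = ℓ ∧ (∀ N ∈ L, N ∈ Γ) ∧
    x = z2e (tnorm (prodL L)) / (ℓ : EReal)}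

/-- Joint spectral radius: `inf_{ℓ>0} min{ ‖M₁⋯M_ℓ‖_∞/ℓ : Mᵢ ∈ Γ }`. -/
noncomputable def jsr {d : ℕ} (Γ : Set (Mat d)) : EReal :=
  ⨅ (ℓ : ℕ) (_ : 0 < ℓ), minNorm Γ ℓ

/-- Weight of the cycle `c 0 → c 1 → ⋯ → c ℓ → c 0` (length `ℓ+1`),
addition of `Fin (ℓ+1)` being cyclic. -/
def cycWeight {d : ℕ} (M : Mat d) {ℓ : ℕ} (c : Fin (ℓ+1) → Fin d) : Zmax :=
  ∑ k : Fin (ℓ+1), M (c k) (c (k+1))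

/-- Tropical spectral radius of a single matrix: the maximal average weight of
cycles in the graph of `M` (and `-∞` if there is no cycle of finite weight). -/
noncomputable def rho {d : ℕ} (M : Mat d) : EReal :=
  ⨆ (ℓ : ℕ) (c : Fin (ℓ+1) → Fin d), z2e (cycWeight M c) / ((ℓ+1 : ℕ) : EReal)

/-- A critical cycle: a cycle with finite weight whose average weight is `rho M`. -/
def IsCritCycle {d : ℕ} (M : Mat d) {ℓ : ℕ} (c : Fin (ℓ+1) → Fin d) : Prop :=
  cycWeight M c ≠ ⊥ ∧ z2e (cycWeight M c) / ((ℓ+1 : ℕ) : EReal) = rho M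

/-- Edges of the critical graph: edges lying on some critical cycle. -/
def critEdge {d : ℕ} (M : Mat d) (i j : Fin d) : Prop :=
  ∃ (ℓ : ℕ) (c : Fin (ℓ+1) → Fin d) (k : Fin (ℓ+1)),
    IsCritCycle M c ∧ c k = i ∧ c (k+1) = j

/-- Vertices of the critical graph. -/
def critVertex {d : ℕ} (M : Mat d) (i : Fin d) : Prop :=
  ∃ j, critEdge M i j ∨ critEdge M j i

/-- Strongly connected components of the critical graph: maximal sets of critical
vertices that are pairwise connected by paths in the critical graph. -/
def IsSCC {d : ℕ} (M : Mat d) (S : Set (Fin d)) : Prop :=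
  (∀ i ∈ S, critVertex M i) ∧
  (∀ i ∈ S, ∀ j ∈ S, Relation.ReflTransGen (critEdge M) i j) ∧
  (∀ T : Set (Fin d), S ⊆ T → (∀ i ∈ T, critVertex M i) →
    (∀ i ∈ T, ∀ j ∈ T, Relation.ReflTransGen (critEdge M) i j) → T = S)

/-- Greatest common divisor of a set of natural numbers. -/
noncomputable def setGcd (A : Set ℕ) : ℕ :=
  sInf {g | (∀ a ∈ A, g ∣ a) ∧ ∀ h, (∀ a ∈ A, h ∣ a) → h ∣ g}

/-- Cyclicity of a strongly connected component `S` of the critical graph of `M`: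
the gcd of the lengths of the cycles of the critical graph lying in `S`. -/
noncomputable def cyclicity {d : ℕ} (M : Mat d) (S : Set (Fin d)) : ℕ :=
  setGcd {n | ∃ (ℓ : ℕ) (c : Fin (ℓ+1) → Fin d), n = ℓ + 1 ∧
    (∀ k, critEdge M (c k) (c (k+1))) ∧ (∀ k, c k ∈ S)}

/-- Ultimate rank of a matrix: the sum of the cyclicities of the strongly
connected components of its critical graph. -/
noncomputable def urk {d : ℕ} (M : Mat d) : ℕ :=
  ∑ᶠ (S : Set (Fin d)) (_ : IsSCC M S), cyclicity M S

/-- `k ⊙ M`: add the integer `k` to every entry. -/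
def kadd {d : ℕ} (k : ℤ) (M : Mat d) : Mat d := fun i j => (k : Zmax) + M i j

/-- Value `I M F` computed from an initial row vector, a matrix and a final
column vector. -/
def runVal {d : ℕ} (I : Fin d → Zmax) (M : Mat d) (F : Fin d → Zmax) : Zmax :=
  Finset.univ.sup fun i => Finset.univ.sup fun j => I i + M i j + F j

/-!
Walks of length `n` in the graph of `M` are what `M^n` maximises over. A closed walk is a cycle
in the sense of `rho`, so its weight is at most its length times `ρ(M)`. Any walk longer than `d`
revisits a vertex; cutting out the closed subwalk in between and inducting bounds every walk of
length `n` by `nρ(M) + O(1)`, so `limsup ‖M^n‖/n ≤ ρ(M)` (and `‖M^n‖ = -∞` for `n ≥ d` when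
`ρ(M) = -∞`). Conversely, going round a cycle of average weight `w/L` forever gives walks of
weight `nw/L - O(1)`, so `liminf ‖M^n‖/n ≥ w/L` for every cycle.
-/

open Finset
open Fin.NatCast

lemma z2e_bot : z2e ⊥ = ⊥ := rfl

lemma z2e_coe (n : ℤ) : z2e n = ((n : ℝ) : EReal) := rfl

lemma z2e_add (x y : Zmax) : z2e (x + y) = z2e x + z2e y := by
  induction x using WithBot.recBotCoe <;> induction y using WithBot.recBotCoe <;>
    simp [z2e, ← WithBot.coe_add]

lemma z2e_monotone : Monotone z2e := by
  intro x y h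
  induction x using WithBot.recBotCoe with
  | bot => exact bot_le
  | coe a =>
    induction y using WithBot.recBotCoe with
    | bot => exact absurd h (not_le.2 (WithBot.bot_lt_coe a))
    | coe b => exact EReal.coe_le_coe_iff.2 (Int.cast_le.2 (WithBot.coe_le_coe.1 h))

section Walks

variable {d : ℕ} (M : Mat d)

lemma le_tnorm (N : Mat d) (i j : Fin d) : N i j ≤ tnorm N :=
  (le_sup (f := fun j => N i j) (mem_univ j)).trans
    (le_sup (f := fun i => univ.sup fun j => N i j) (mem_univ i))

lemma z2e_tnorm_le_iff {N : Mat d} {B : EReal} :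
    z2e (tnorm N) ≤ B ↔ ∀ i j, z2e (N i j) ≤ B := by
  have hsup (s : Finset (Fin d)) (f : Fin d → Zmax) : z2e (s.sup f) = s.sup (z2e ∘ f) :=
    apply_sup_eq_sup_comp z2e z2e_monotone.map_sup rfl
  simp only [tnorm, hsup, Function.comp_def, Finset.sup_le_iff, mem_univ, true_implies]

def walkWeight (p : ℕ → Fin d) (n : ℕ) : Zmax :=
  ∑ k ∈ range n, M (p k) (p (k + 1))

lemma walkWeight_add (p : ℕ → Fin d) (m n : ℕ) :
    walkWeight M p (m + n) = walkWeight M p m + walkWeight M (fun k => p (m + k)) n := by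
  simp only [walkWeight, sum_range_add, add_assoc]

lemma walkWeight_one_add (p : ℕ → Fin d) (n : ℕ) :
    walkWeight M p (1 + n) = M (p 0) (p 1) + walkWeight M (fun k => p (1 + k)) n := by
  rw [walkWeight_add, walkWeight, sum_range_one]

lemma walkWeight_congr {p q : ℕ → Fin d} {n : ℕ} (h : ∀ k ≤ n, p k = q k) :
    walkWeight M p n = walkWeight M q n :=
  sum_congr rfl fun k hk => by
    rw [mem_range] at hk
    rw [h k hk.le, h (k + 1) hk]

lemma walkWeight_le_tpow (n : ℕ) (p : ℕ → Fin d) :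
    walkWeight M p n ≤ tpow M n (p 0) (p n) := by
  induction n generalizing p with
  | zero => simp [walkWeight, tpow, tId]
  | succ n ih =>
    rw [add_comm n 1, walkWeight_one_add]
    calc M (p 0) (p 1) + walkWeight M (fun k => p (1 + k)) n
        ≤ M (p 0) (p 1) + tpow M n (p 1) (p (1 + n)) := by gcongr; exact ih _
      _ ≤ tpow M (1 + n) (p 0) (p (1 + n)) := by
        rw [add_comm 1 n]
        exact le_sup (f := fun k => M (p 0) k + tpow M n k (p (n + 1))) (mem_univ (p 1))

lemma exists_walk_tpow_le (n : ℕ) (i j : Fin d) :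
    ∃ p : ℕ → Fin d, p 0 = i ∧ tpow M n i j ≤ walkWeight M p n := by
  induction n generalizing i with
  | zero =>
    refine ⟨fun _ => i, rfl, ?_⟩
    simp only [tpow, tId, walkWeight, range_zero, sum_empty]
    split_ifs <;> simp
  | succ n ih =>
    obtain ⟨k, -, hk⟩ := exists_mem_eq_sup univ ⟨i, mem_univ i⟩
      fun k => M i k + tpow M n k j
    obtain ⟨p, hp0, hp⟩ := ih k
    refine ⟨fun m => if m = 0 then i else p (m - 1), rfl, ?_⟩
    rw [add_comm n 1, walkWeight_one_add]
    simp only [if_true, one_ne_zero, if_false, Nat.sub_self, hp0, Nat.add_eq_zero_iff,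
      add_tsub_cancel_left]
    calc tpow M (1 + n) i j = M i k + tpow M n k j := by rw [add_comm]; exact hk
      _ ≤ M i k + walkWeight M p n := by gcongr

lemma z2e_tpow_le_of_walkWeight_le {n : ℕ} {B : EReal} (h : ∀ p, z2e (walkWeight M p n) ≤ B)
    (i j : Fin d) :
    z2e (tpow M n i j) ≤ B := by
  obtain ⟨p, -, hp⟩ := exists_walk_tpow_le M n i j
  exact (z2e_monotone hp).trans (h p)

end Walks

section Cycles

variable {d : ℕ} (M : Mat d)

lemma cycWeight_eq_walkWeight {ℓ : ℕ} (c : Fin (ℓ + 1) → Fin d) :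
    cycWeight M c = walkWeight M (fun k => c k) (ℓ + 1) := by
  rw [cycWeight, walkWeight, ← Fin.sum_univ_eq_sum_range
    (fun k => M (c (k : Fin (ℓ + 1))) (c ((k + 1 : ℕ) : Fin (ℓ + 1))))]
  simp only [Fin.cast_val_eq_self, Nat.cast_add, Nat.cast_one]

lemma walkWeight_le_of_entry_le {A : ℤ} (hA : ∀ i j, M i j ≤ A) (p : ℕ → Fin d) (n : ℕ) :
    walkWeight M p n ≤ ((n * A : ℤ) : Zmax) := by
  have := sum_le_card_nsmul (range n) (fun k => M (p k) (p (k + 1))) (A : Zmax) fun _ _ => hA _ _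
  rwa [card_range, ← WithBot.coe_nsmul, nsmul_eq_mul] at this

lemma exists_entry_le : ∃ A : ℤ, ∀ i j, M i j ≤ A := by
  obtain ⟨A, hA⟩ := Finite.exists_le fun ij : Fin d × Fin d => (M ij.1 ij.2).unbotD 0
  exact ⟨A, fun i j => (WithBot.le_coe_unbotD _ 0).trans (WithBot.coe_le_coe.2 (hA (i, j)))⟩

lemma rho_le_of_entry_le {A : ℤ} (hA : ∀ i j, M i j ≤ A) : rho M ≤ ((A : ℝ) : EReal) := by
  refine iSup₂_le fun ℓ c => ?_
  rw [EReal.div_le_iff_le_mul (by exact_mod_cast ℓ.succ_pos) (EReal.natCast_ne_top _),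
    ← EReal.coe_coe_eq_natCast, ← EReal.coe_mul, cycWeight_eq_walkWeight]
  refine (z2e_monotone (walkWeight_le_of_entry_le M hA _ _)).trans_eq ?_
  rw [z2e_coe]
  push_cast
  rfl

lemma z2e_walkWeight_le_mul_rho {p : ℕ → Fin d} {m : ℕ} (hm : 0 < m) (hp : p m = p 0) :
    z2e (walkWeight M p m) ≤ m * rho M := by
  obtain ⟨ℓ, rfl⟩ := Nat.exists_eq_add_of_lt hm
  rw [zero_add] at hp ⊢
  have hcycle : walkWeight M p (ℓ + 1) = cycWeight M fun k : Fin (ℓ + 1) => p k := by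
    rw [cycWeight_eq_walkWeight]
    refine walkWeight_congr M fun k hk => ?_
    rcases hk.lt_or_eq with hk | rfl
    · rw [Fin.val_natCast, Nat.mod_eq_of_lt hk]
    · rw [Fin.natCast_self, Fin.val_zero, hp]
  rw [hcycle, ← EReal.div_le_iff_le_mul (by exact_mod_cast ℓ.succ_pos) (EReal.natCast_ne_top _)]
  exact le_iSup₂ (f := fun (ℓ : ℕ) (c : Fin (ℓ + 1) → Fin d) =>
    z2e (cycWeight M c) / ((ℓ + 1 : ℕ) : EReal)) ℓ _

lemma exists_closed_subwalk (p : ℕ → Fin d) :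
    ∃ a m, 0 < m ∧ a + m ≤ d ∧ p (a + m) = p a := by
  obtain ⟨x, y, hxy, hp⟩ := Fintype.exists_ne_map_eq_of_card_lt
    (fun k : Fin (d + 1) => p k) (by simp)
  rcases lt_or_gt_of_ne (Fin.val_ne_of_ne hxy) with h | h
  · exact ⟨x, y - x, by omega, by omega, by rw [Nat.add_sub_cancel' h.le]; exact hp.symm⟩
  · exact ⟨y, x - y, by omega, by omega, by rw [Nat.add_sub_cancel' h.le]; exact hp⟩

lemma walkWeight_splice {p : ℕ → Fin d} {a m : ℕ} (hp : p (a + m) = p a) (s : ℕ) :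
    walkWeight M p (a + m + s) = walkWeight M (fun k => p (a + k)) m +
      walkWeight M (fun k => if k < a then p k else p (k + m)) (a + s) := by
  set q : ℕ → Fin d := fun k => if k < a then p k else p (k + m)
  have hprefix : walkWeight M q a = walkWeight M p a := walkWeight_congr M fun k hk => by
    rcases hk.lt_or_eq with hk | rfl
    · simp [q, hk]
    · simp [q, hp]
  have hsuffix : (fun k => q (a + k)) = fun k => p (a + m + k) := by
    funext k
    simp only [q, if_neg (Nat.not_lt.2 (Nat.le_add_right a k))]
    congr 1
    omega
  rw [walkWeight_add, walkWeight_add, walkWeight_add M q, hprefix, hsuffix]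
  simp only [add_assoc, add_left_comm]

lemma walkWeight_eq_bot_of_rho_eq_bot (h : rho M = ⊥) {n : ℕ} (hn : d ≤ n) (p : ℕ → Fin d) :
    walkWeight M p n = ⊥ := by
  obtain ⟨a, m, hm, hamd, hp⟩ := exists_closed_subwalk p
  obtain ⟨s, rfl⟩ := Nat.exists_eq_add_of_le (hamd.trans hn)
  have hcycle := z2e_walkWeight_le_mul_rho M (p := fun k => p (a + k)) hm hp
  rw [h, EReal.mul_bot_of_pos (by exact_mod_cast hm), le_bot_iff] at hcycle
  have hbot : walkWeight M (fun k => p (a + k)) m = ⊥ := by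
    induction h : walkWeight M (fun k => p (a + k)) m using WithBot.recBotCoe with
    | bot => rfl
    | coe w => rw [h, z2e_coe] at hcycle; exact absurd hcycle (EReal.coe_ne_bot _)
  rw [walkWeight_splice M hp, hbot, WithBot.bot_add]

lemma z2e_walkWeight_le_of_rho_eq {ρ : ℝ} (hρ : rho M = ρ) {A : ℤ} (hA : ∀ i j, M i j ≤ A)
    (hρA : ρ ≤ A) (n : ℕ) (p : ℕ → Fin d) :
    z2e (walkWeight M p n) ≤ ((n * ρ + d * (A - ρ) : ℝ) : EReal) := by
  induction n using Nat.strong_induction_on generalizing p with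
  | _ n ih =>
    rcases le_or_gt n d with hnd | hdn
    · refine (z2e_monotone (walkWeight_le_of_entry_le M hA p n)).trans ?_
      rw [z2e_coe, EReal.coe_le_coe_iff]
      have : (n : ℝ) ≤ d := by exact_mod_cast hnd
      push_cast
      nlinarith
    · obtain ⟨a, m, hm, hamd, hp⟩ := exists_closed_subwalk p
      obtain ⟨s, rfl⟩ := Nat.exists_eq_add_of_le (hamd.trans hdn.le)
      have hcycle := z2e_walkWeight_le_mul_rho M (p := fun k => p (a + k)) hm hp
      rw [hρ, ← EReal.coe_coe_eq_natCast, ← EReal.coe_mul] at hcycle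
      have hrest := ih (a + s) (by omega) fun k => if k < a then p k else p (k + m)
      rw [walkWeight_splice M hp, z2e_add]
      refine (add_le_add hcycle hrest).trans_eq ?_
      rw [← EReal.coe_add, EReal.coe_eq_coe_iff]
      push_cast
      ring

lemma exists_le_walkWeight_around_cycle {ℓ : ℕ} (c : Fin (ℓ + 1) → Fin d) {w : ℤ}
    (hw : cycWeight M c = w) :
    ∃ β : ℤ, ∀ n, (((n / (ℓ + 1) : ℕ) * w + β : ℤ) : Zmax) ≤ walkWeight M (fun k => c k) n := by
  set p : ℕ → Fin d := fun k => c k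
  have hper : (fun k => p (ℓ + 1 + k)) = p := funext fun k => by simp [p]
  have hL : walkWeight M p (ℓ + 1) = w := by rw [← hw, cycWeight_eq_walkWeight]
  have hwind (q r : ℕ) :
      walkWeight M p (q * (ℓ + 1) + r) = ((q * w : ℤ) : Zmax) + walkWeight M p r := by
    induction q with
    | zero => simp
    | succ q ih =>
      rw [show (q + 1) * (ℓ + 1) + r = ℓ + 1 + (q * (ℓ + 1) + r) by ring, walkWeight_add, hL,
        hper, ih, ← add_assoc, ← WithBot.coe_add]
      congr 2
      push_cast
      ring
  have hfinite (r : ℕ) (hr : r < ℓ + 1) : walkWeight M p r ≠ ⊥ := fun hbot => by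
    have := walkWeight_add M p r (ℓ + 1 - r)
    rw [Nat.add_sub_cancel' hr.le, hL, hbot, WithBot.bot_add] at this
    exact WithBot.coe_ne_bot this
  obtain ⟨β, hβ⟩ := (Set.finite_range fun r : Fin (ℓ + 1) =>
    (walkWeight M p r).unbot (hfinite r r.isLt)).bddBelow
  refine ⟨β, fun n => ?_⟩
  have hr : n % (ℓ + 1) < ℓ + 1 := Nat.mod_lt n ℓ.succ_pos
  have hβr : (β : Zmax) ≤ walkWeight M p (n % (ℓ + 1)) := by
    rw [← WithBot.coe_unbot _ (hfinite _ hr), WithBot.coe_le_coe]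
    exact hβ ⟨⟨_, hr⟩, rfl⟩
  rw [← Nat.div_add_mod' n (ℓ + 1), hwind, WithBot.coe_add, Nat.div_add_mod']
  gcongr

end Cycles

lemma mul_div_sub_abs_le_natDiv_mul {L : ℕ} (hL : 0 < L) (n : ℕ) (w : ℝ) :
    n * (w / L) - |w| ≤ (n / L : ℕ) * w := by
  have hL0 : (0 : ℝ) < L := by exact_mod_cast hL
  have hn : (n : ℝ) = (n / L : ℕ) * L + (n % L : ℕ) := by exact_mod_cast (Nat.div_add_mod' n L).symm
  have hr : ((n % L : ℕ) : ℝ) ≤ L := by exact_mod_cast (Nat.mod_lt n hL).le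
  have hremainder : ((n % L : ℕ) : ℝ) * w / L ≤ |w| := by
    rw [div_le_iff₀ hL0]
    nlinarith [le_abs_self w, abs_nonneg w, Nat.cast_nonneg (α := ℝ) (n % L)]
  have hsplit : (n : ℝ) * (w / L) = (n / L : ℕ) * w + (n % L : ℕ) * w / L := by
    rw [hn]
    field_simp
  linarith

lemma tendsto_coe_add_div_natCast (x C : ℝ) :
    Tendsto (fun n : ℕ => ((x + C / n : ℝ) : EReal)) atTop (nhds (x : EReal)) :=
  EReal.tendsto_coe.2 <| by
    simpa using tendsto_const_nhds.add (tendsto_const_div_atTop_nhds_zero_nat C)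

lemma coe_mul_add_div_natCast {n : ℕ} (hn : 0 < n) (x C : ℝ) :
    ((n * x + C : ℝ) : EReal) / n = ((x + C / n : ℝ) : EReal) := by
  rw [← EReal.coe_coe_eq_natCast, ← EReal.coe_div]
  congr 1
  field_simp

lemma limsup_div_natCast_le {g : ℕ → EReal} {x C : ℝ}
    (h : ∀ n : ℕ, g n ≤ ((n * x + C : ℝ) : EReal)) :
    limsup (fun n : ℕ => g n / (n : EReal)) atTop ≤ x :=
  calc limsup (fun n : ℕ => g n / (n : EReal)) atTop
      ≤ limsup (fun n : ℕ => ((x + C / n : ℝ) : EReal)) atTop := by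
        refine limsup_le_limsup ?_
        filter_upwards [eventually_gt_atTop 0] with n hn
        rw [← coe_mul_add_div_natCast hn]
        exact EReal.div_le_div_right_of_nonneg (Nat.cast_nonneg' n) (h n)
    _ = x := (tendsto_coe_add_div_natCast x C).limsup_eq

lemma le_liminf_div_natCast {g : ℕ → EReal} {x C : ℝ}
    (h : ∀ n : ℕ, ((n * x + C : ℝ) : EReal) ≤ g n) :
    (x : EReal) ≤ liminf (fun n : ℕ => g n / (n : EReal)) atTop :=
  calc (x : EReal) = liminf (fun n : ℕ => ((x + C / n : ℝ) : EReal)) atTop :=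
        (tendsto_coe_add_div_natCast x C).liminf_eq.symm
    _ ≤ liminf (fun n : ℕ => g n / (n : EReal)) atTop := by
        refine liminf_le_liminf ?_
        filter_upwards [eventually_gt_atTop 0] with n hn
        rw [← coe_mul_add_div_natCast hn]
        exact EReal.div_le_div_right_of_nonneg (Nat.cast_nonneg' n) (h n)

section SpectralRadius

variable {d : ℕ} (M : Mat d)

lemma exists_affine_le_z2e_tnorm_tpow {ℓ : ℕ} (c : Fin (ℓ + 1) → Fin d) {w : ℤ}
    (hw : cycWeight M c = w) :
    ∃ C : ℝ, ∀ n : ℕ, ((n * (w / (ℓ + 1 : ℕ)) + C : ℝ) : EReal) ≤ z2e (tnorm (tpow M n)) := by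
  obtain ⟨β, hβ⟩ := exists_le_walkWeight_around_cycle M c hw
  refine ⟨β - |(w : ℝ)|, fun n => ?_⟩
  calc ((n * (w / (ℓ + 1 : ℕ)) + (β - |(w : ℝ)|) : ℝ) : EReal)
      ≤ z2e ((n / (ℓ + 1) : ℕ) * w + β : ℤ) := by
        rw [z2e_coe, EReal.coe_le_coe_iff, Int.cast_add, Int.cast_mul, Int.cast_natCast]
        linarith [mul_div_sub_abs_le_natDiv_mul ℓ.succ_pos n w]
    _ ≤ z2e (walkWeight M (fun k => c k) n) := z2e_monotone (hβ n)
    _ ≤ z2e (tnorm (tpow M n)) := z2e_monotone ((walkWeight_le_tpow M n _).trans (le_tnorm _ _ _))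

lemma rho_le_liminf :
    rho M ≤ liminf (fun n : ℕ => z2e (tnorm (tpow M n)) / (n : EReal)) atTop := by
  refine iSup₂_le fun ℓ c => ?_
  by_cases hbot : cycWeight M c = ⊥
  · rw [hbot, z2e_bot, EReal.bot_div_of_pos_ne_top (by exact_mod_cast ℓ.succ_pos)
      (EReal.natCast_ne_top _)]
    exact bot_le
  obtain ⟨w, hw⟩ := WithBot.ne_bot_iff_exists.1 hbot
  obtain ⟨C, hC⟩ := exists_affine_le_z2e_tnorm_tpow M c hw.symm
  rw [← hw, z2e_coe, ← EReal.coe_coe_eq_natCast, ← EReal.coe_div]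
  exact le_liminf_div_natCast hC

lemma limsup_le_rho :
    limsup (fun n : ℕ => z2e (tnorm (tpow M n)) / (n : EReal)) atTop ≤ rho M := by
  obtain ⟨A, hA⟩ := exists_entry_le M
  by_cases hbot : rho M = ⊥
  · rw [hbot]
    refine limsup_le_of_le (h := ?_)
    filter_upwards [eventually_ge_atTop (d + 1)] with n hn
    have htnorm : z2e (tnorm (tpow M n)) ≤ ⊥ :=
      z2e_tnorm_le_iff.2 <| z2e_tpow_le_of_walkWeight_le M fun p => by
        rw [walkWeight_eq_bot_of_rho_eq_bot M hbot (by omega)]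
        rfl
    rw [le_bot_iff.1 htnorm, EReal.bot_div_of_pos_ne_top (by exact_mod_cast (by omega : 0 < n))
      (EReal.natCast_ne_top n)]
  · have hρA := rho_le_of_entry_le M hA
    set ρ := (rho M).toReal
    have hρ : rho M = ρ := (EReal.coe_toReal (hρA.trans_lt (EReal.coe_lt_top _)).ne hbot).symm
    rw [hρ, EReal.coe_le_coe_iff] at hρA
    rw [hρ]
    exact limsup_div_natCast_le fun n => z2e_tnorm_le_iff.2 <|
      z2e_tpow_le_of_walkWeight_le M (z2e_walkWeight_le_of_rho_eq M hρ hA hρA n)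

end SpectralRadius

theorem stmt_3 {d : ℕ} (M : Mat d) :
    Filter.Tendsto (fun n : ℕ => z2e (tnorm (tpow M n)) / (n : EReal))
      Filter.atTop (nhds (rho M)) :=
  tendsto_of_le_liminf_of_limsup_le (rho_le_liminf M) (limsup_le_rho M)
end

section
/- Let M be a d×d matrix over Z_max and M̂ the (2d+1)×(2d+1) matrix with two diagonal copies of M, a 0 in the bottom-right corner, and -∞ elsewhere. If ρ(M) < 0 then urk(M̂) = 1, and if ρ(M) ≥ 0 then urk(M̂) ≥ 2. Consequently ρ(M) ≥ 0 if and only if urk(M̂) ≥ 2. -/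
open Filter

/-- The `(2d+1) × (2d+1)` block matrix `M̂` with two diagonal copies of `M`,
a `0` in the bottom-right corner, and `-∞` elsewhere. -/
def hat {d : ℕ} (M : Mat d) : Mat (d + d + 1) := fun i j =>
  if h : (i : ℕ) < d ∧ (j : ℕ) < d then M ⟨i, h.1⟩ ⟨j, h.2⟩
  else if h2 : d ≤ (i : ℕ) ∧ (i : ℕ) < d + d ∧ d ≤ (j : ℕ) ∧ (j : ℕ) < d + d then
    M ⟨(i : ℕ) - d, by omega⟩ ⟨(j : ℕ) - d, by omega⟩
  else if (i : ℕ) = d + d ∧ (j : ℕ) = d + d then (0 : Zmax) else ⊥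

/-!
The three diagonal blocks of `M̂` are not joined by any finite edge, so a cycle of finite
weight of `M̂` is a cycle of `M` in one of the two copies, or the loop of weight `0` at the
corner; hence `ρ(M̂) = max (ρ(M), 0)`. If `ρ(M) < 0`, the critical graph of `M̂` is that loop
alone, of cyclicity `1`. If `ρ(M) ≥ 0`, the maximal cycle mean of `M` is attained (on a cycle of
length at most `d`), and a critical cycle of `M` reappears in both copies, where it spans two
different strongly connected components, each of cyclicity at least `1`.
-/

open Fin.NatCast Relation

noncomputable def meanWeight (w : Zmax) (n : ℕ) : EReal := z2e w / (n : EReal)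

lemma meanWeight_coe (w : ℤ) (n : ℕ) : meanWeight w n = ((w / n : ℝ) : EReal) := by
  rw [EReal.coe_div]
  rfl

lemma meanWeight_bot {n : ℕ} (hn : 0 < n) : meanWeight ⊥ n = ⊥ :=
  EReal.bot_div_of_pos_ne_top (by exact_mod_cast hn) (EReal.natCast_ne_top n)

lemma meanWeight_zero (n : ℕ) : meanWeight 0 n = 0 := by
  simpa using meanWeight_coe 0 n

lemma add_div_add_le_max {a b m n : ℝ} (hm : 0 < m) (hn : 0 < n) :
    (a + b) / (m + n) ≤ max (a / m) (b / n) := by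
  set t := max (a / m) (b / n)
  have ha : a ≤ t * m := (div_le_iff₀ hm).1 (le_max_left _ _)
  have hb : b ≤ t * n := (div_le_iff₀ hn).1 (le_max_right _ _)
  rw [div_le_iff₀ (add_pos hm hn)]
  linarith

lemma meanWeight_add_le_max (v w : Zmax) {m n : ℕ} (hm : 0 < m) (hn : 0 < n) :
    meanWeight (v + w) (m + n) ≤ max (meanWeight v m) (meanWeight w n) := by
  induction v using WithBot.recBotCoe with
  | bot => simp [meanWeight_bot (Nat.add_pos_left hm n)]
  | coe a =>
    induction w using WithBot.recBotCoe with
    | bot => simp [meanWeight_bot (Nat.add_pos_left hm n)]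
    | coe b =>
      rw [← WithBot.coe_add, meanWeight_coe, meanWeight_coe, meanWeight_coe,
        ← EReal.coe_strictMono.monotone.map_max, EReal.coe_le_coe_iff]
      push_cast
      exact add_div_add_le_max (by exact_mod_cast hm) (by exact_mod_cast hn)

lemma exists_gcd_of_set (A : Set ℕ) :
    ∃ g, (∀ a ∈ A, g ∣ a) ∧ ∀ h, (∀ a ∈ A, h ∣ a) → h ∣ g := by
  obtain ⟨k, hk⟩ := Submodule.IsPrincipal.principal (Ideal.span ((fun a : ℕ => (a : ℤ)) '' A))
  rw [← Ideal.span] at hk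
  refine ⟨k.natAbs, fun a ha => ?_, fun h hh => ?_⟩
  · have : (a : ℤ) ∈ Ideal.span {k} := hk ▸ Ideal.subset_span ⟨a, ha, rfl⟩
    exact Int.natAbs_dvd_natAbs.2 (Ideal.mem_span_singleton.1 this)
  · have : Ideal.span {k} ≤ Ideal.span {(h : ℤ)} := by
      rw [← hk, Ideal.span_le]
      rintro _ ⟨a, ha, rfl⟩
      exact Ideal.mem_span_singleton.2 (Int.natCast_dvd_natCast.2 (hh a ha))
    exact Int.natAbs_dvd_natAbs.2 (Ideal.span_singleton_le_span_singleton.1 this)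

lemma setGcd_dvd {A : Set ℕ} {a : ℕ} (ha : a ∈ A) : setGcd A ∣ a :=
  (Nat.sInf_mem (exists_gcd_of_set A)).1 a ha

section Cycles

lemma reflTransGen_of_cycle {α : Type*} {r : α → α → Prop} {ℓ : ℕ} (c : Fin (ℓ+1) → α)
    (hc : ∀ k, r (c k) (c (k+1))) (k k' : Fin (ℓ+1)) : ReflTransGen r (c k) (c k') := by
  have walk : ∀ m : ℕ, ReflTransGen r (c k) (c (k + m)) := by
    intro m
    induction m with
    | zero => simpa using ReflTransGen.refl
    | succ m ih => exact ih.tail (by rw [Nat.cast_succ, ← add_assoc]; exact hc _)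
  simpa using walk (k' - k).val

variable {d : ℕ} (M : Mat d)

lemma meanWeight_le_rho {ℓ : ℕ} (c : Fin (ℓ+1) → Fin d) :
    meanWeight (cycWeight M c) (ℓ+1) ≤ rho M :=
  le_iSup₂ (f := fun ℓ (c : Fin (ℓ+1) → Fin d) => meanWeight (cycWeight M c) (ℓ+1)) ℓ c

lemma rho_le {x : EReal}
    (h : ∀ (ℓ : ℕ) (c : Fin (ℓ+1) → Fin d), meanWeight (cycWeight M c) (ℓ+1) ≤ x) :
    rho M ≤ x :=
  iSup₂_le h

lemma ne_bot_of_cycWeight_ne_bot {ℓ : ℕ} {c : Fin (ℓ+1) → Fin d} (hc : cycWeight M c ≠ ⊥)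
    (k : Fin (ℓ+1)) : M (c k) (c (k+1)) ≠ ⊥ :=
  fun hk => hc (WithBot.sum_eq_bot_iff.2 ⟨k, Finset.mem_univ k, hk⟩)

lemma cycWeight_rotate {ℓ : ℕ} (c : Fin (ℓ+1) → Fin d) (r : Fin (ℓ+1)) :
    cycWeight M (fun k => c (k + r)) = cycWeight M c :=
  Fintype.sum_equiv (Equiv.addRight r) _ _ fun _ => by simp [add_right_comm]

lemma cycWeight_comp {e : ℕ} {N : Mat e} (v : Fin d → Fin e) (hv : ∀ i j, N (v i) (v j) = M i j)
    {ℓ : ℕ} (c : Fin (ℓ+1) → Fin d) : cycWeight N (fun k => v (c k)) = cycWeight M c :=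
  Finset.sum_congr rfl fun _ _ => hv _ _

def pathWeight (p : ℕ → Fin d) (n : ℕ) : Zmax := ∑ k ∈ Finset.range n, M (p k) (p (k+1))

lemma pathWeight_add (p : ℕ → Fin d) (m n : ℕ) :
    pathWeight M p (m + n) = pathWeight M p m + pathWeight M (fun k => p (m + k)) n := by
  simp only [pathWeight, Finset.sum_range_add, add_assoc]

lemma pathWeight_eq_cycWeight {ℓ : ℕ} (p : ℕ → Fin d) (hp : p (ℓ+1) = p 0) :
    pathWeight M p (ℓ+1) = cycWeight M (fun k : Fin (ℓ+1) => p k) := by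
  rw [pathWeight, ← Fin.sum_univ_eq_sum_range (fun k => M (p k) (p (k+1)))]
  refine Finset.sum_congr rfl fun k _ => ?_
  change M (p k) (p (k + 1)) = M (p k) (p (k + 1 : Fin (ℓ+1)))
  rw [Fin.val_add_one]
  split_ifs with hk
  · simp [hk, hp]
  · rfl

lemma cycWeight_eq_pathWeight {ℓ : ℕ} (c : Fin (ℓ+1) → Fin d) :
    cycWeight M c = pathWeight M (fun m => c m) (ℓ+1) := by
  rw [pathWeight_eq_cycWeight M _ (by simp)]
  simp

lemma exists_cycWeight_eq_add {ℓ : ℕ} (c : Fin (ℓ+1) → Fin d) {b : ℕ} (hb : 0 < b)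
    (hbℓ : b ≤ ℓ) (hcb : c b = c 0) :
    ∃ (ℓ₁ ℓ₂ : ℕ) (c₁ : Fin (ℓ₁+1) → Fin d) (c₂ : Fin (ℓ₂+1) → Fin d),
      ℓ₁ + 1 + (ℓ₂ + 1) = ℓ + 1 ∧ cycWeight M c = cycWeight M c₁ + cycWeight M c₂ := by
  obtain ⟨ℓ₁, rfl⟩ : ∃ ℓ₁, b = ℓ₁ + 1 := ⟨b - 1, by omega⟩
  obtain ⟨ℓ₂, rfl⟩ : ∃ ℓ₂, ℓ = ℓ₁ + 1 + ℓ₂ := ⟨ℓ - (ℓ₁ + 1), by omega⟩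
  set p : ℕ → Fin d := fun m => c m
  refine ⟨ℓ₁, ℓ₂, fun k => p k, fun k => p (ℓ₁ + 1 + k), by omega, ?_⟩
  have hp₂ : p (ℓ₁ + 1 + (ℓ₂ + 1)) = p (ℓ₁ + 1 + 0) := by
    have hzero : ((ℓ₁ + 1 + (ℓ₂ + 1) : ℕ) : Fin (ℓ₁ + 1 + ℓ₂ + 1)) = 0 :=
      Fin.ext (by rw [Fin.val_natCast, ← Nat.add_assoc, Nat.mod_self]; rfl)
    simp only [p, add_zero, hzero, hcb]
  rw [cycWeight_eq_pathWeight]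
  change pathWeight M p (ℓ₁ + 1 + (ℓ₂ + 1)) = _
  rw [pathWeight_add,
    pathWeight_eq_cycWeight M p (by simpa [p] using hcb), pathWeight_eq_cycWeight M _ hp₂]

/-- A cycle longer than `d` repeats a vertex; cut there, it splits into two shorter cycles, the
larger of whose mean weights is at least its own. -/
lemma exists_short_cycle_meanWeight_ge {ℓ : ℕ} (c : Fin (ℓ+1) → Fin d) :
    ∃ ℓ' < d, ∃ c' : Fin (ℓ'+1) → Fin d,
      meanWeight (cycWeight M c) (ℓ+1) ≤ meanWeight (cycWeight M c') (ℓ'+1) := by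
  induction ℓ using Nat.strong_induction_on with
  | _ ℓ ih =>
  rcases lt_or_ge ℓ d with hℓ | hℓ
  · exact ⟨ℓ, hℓ, c, le_rfl⟩
  obtain ⟨x, y, hxy, hc⟩ := Fintype.exists_ne_map_eq_of_card_lt c
    (by simp only [Fintype.card_fin]; omega)
  have hyx : 0 < (y - x).val := Nat.pos_of_ne_zero fun h => hxy (sub_eq_zero.1 (Fin.ext h)).symm
  obtain ⟨ℓ₁, ℓ₂, c₁, c₂, hlen, hw⟩ := exists_cycWeight_eq_add M (fun k => c (k + x)) hyx
    (by omega) (by simp [hc])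
  have hmean := meanWeight_add_le_max (cycWeight M c₁) (cycWeight M c₂) ℓ₁.succ_pos ℓ₂.succ_pos
  rw [hlen, ← hw, cycWeight_rotate] at hmean
  rcases le_max_iff.1 hmean with h | h
  · obtain ⟨ℓ', hℓ', c', h'⟩ := ih ℓ₁ (by omega) c₁
    exact ⟨ℓ', hℓ', c', h.trans h'⟩
  · obtain ⟨ℓ', hℓ', c', h'⟩ := ih ℓ₂ (by omega) c₂
    exact ⟨ℓ', hℓ', c', h.trans h'⟩

lemma exists_isCritCycle (h : rho M ≠ ⊥) :
    ∃ (ℓ : ℕ) (c : Fin (ℓ+1) → Fin d), IsCritCycle M c := by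
  let f : (Σ ℓ : Fin d, Fin (ℓ+1) → Fin d) → EReal := fun s => meanWeight (cycWeight M s.2) (s.1+1)
  have hrho : rho M = ⨆ s, f s := by
    refine le_antisymm (rho_le M fun ℓ c => ?_) (iSup_le fun s => meanWeight_le_rho M s.2)
    obtain ⟨ℓ', hℓ', c', h'⟩ := exists_short_cycle_meanWeight_ge M c
    exact h'.trans (le_iSup f ⟨⟨ℓ', hℓ'⟩, c'⟩)
  have : Nonempty (Σ ℓ : Fin d, Fin (ℓ+1) → Fin d) := by
    by_contra hempty
    rw [not_nonempty_iff] at hempty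
    exact h (by rw [hrho, iSup_of_empty])
  obtain ⟨s, hs⟩ := exists_eq_ciSup_of_finite (f := f)
  rw [← hrho] at hs
  refine ⟨s.1, s.2, fun hbot => h ?_, hs⟩
  rw [← hs]
  simp only [f, hbot, meanWeight_bot (Nat.succ_pos _)]

end Cycles

section CriticalGraph

variable {n : ℕ} {N : Mat n}

lemma ne_bot_of_critEdge {i j : Fin n} (h : critEdge N i j) : N i j ≠ ⊥ := by
  obtain ⟨ℓ, c, k, ⟨hw, -⟩, rfl, rfl⟩ := h
  exact ne_bot_of_cycWeight_ne_bot N hw k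

lemma IsCritCycle.critEdge {ℓ : ℕ} {c : Fin (ℓ+1) → Fin n} (hc : IsCritCycle N c)
    (k : Fin (ℓ+1)) : critEdge N (c k) (c (k+1)) :=
  ⟨ℓ, c, k, hc, rfl, rfl⟩

variable (N) in
def sccOf (v : Fin n) : Set (Fin n) :=
  {x | critVertex N x ∧ ReflTransGen (critEdge N) x v ∧ ReflTransGen (critEdge N) v x}

lemma isSCC_sccOf {v : Fin n} (hv : critVertex N v) : IsSCC N (sccOf N v) := by
  have hmem : v ∈ sccOf N v := ⟨hv, .refl, .refl⟩
  refine ⟨fun i hi => hi.1, fun i hi j hj => hi.2.1.trans hj.2.2, fun T hsub hcrit hconn => ?_⟩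
  exact Set.Subset.antisymm
    (fun x hx => ⟨hcrit x hx, hconn x hx v (hsub hmem), hconn v (hsub hmem) x hx⟩) hsub

lemma IsCritCycle.mem_sccOf {ℓ : ℕ} {c : Fin (ℓ+1) → Fin n} (hc : IsCritCycle N c)
    (k : Fin (ℓ+1)) : c k ∈ sccOf N (c 0) :=
  ⟨⟨c (k+1), .inl (hc.critEdge k)⟩, reflTransGen_of_cycle c hc.critEdge k 0,
    reflTransGen_of_cycle c hc.critEdge 0 k⟩

lemma IsCritCycle.cyclicity_sccOf_pos {ℓ : ℕ} {c : Fin (ℓ+1) → Fin n} (hc : IsCritCycle N c) :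
    0 < cyclicity N (sccOf N (c 0)) :=
  Nat.pos_of_dvd_of_pos (setGcd_dvd ⟨ℓ, c, rfl, hc.critEdge, hc.mem_sccOf⟩) ℓ.succ_pos

lemma two_le_urk_of_isCritCycle {ℓ₁ ℓ₂ : ℕ} {c₁ : Fin (ℓ₁+1) → Fin n} {c₂ : Fin (ℓ₂+1) → Fin n}
    (h₁ : IsCritCycle N c₁) (h₂ : IsCritCycle N c₂)
    (hunreach : ¬ ReflTransGen (critEdge N) (c₁ 0) (c₂ 0)) : 2 ≤ urk N := by
  classical
  have hne : sccOf N (c₁ 0) ≠ sccOf N (c₂ 0) := fun heq =>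
    hunreach (heq ▸ h₁.mem_sccOf 0 : c₁ 0 ∈ sccOf N (c₂ 0)).2.1
  have hfin : {S | IsSCC N S}.Finite := Set.toFinite _
  have hsub : {sccOf N (c₁ 0), sccOf N (c₂ 0)} ⊆ hfin.toFinset := by
    simp only [Finset.insert_subset_iff, Finset.singleton_subset_iff, Set.Finite.mem_toFinset]
    exact ⟨isSCC_sccOf (h₁.mem_sccOf 0).1, isSCC_sccOf (h₂.mem_sccOf 0).1⟩
  calc 2 ≤ cyclicity N (sccOf N (c₁ 0)) + cyclicity N (sccOf N (c₂ 0)) := by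
        have := h₁.cyclicity_sccOf_pos
        have := h₂.cyclicity_sccOf_pos
        omega
    _ = ∑ S ∈ {sccOf N (c₁ 0), sccOf N (c₂ 0)}, cyclicity N S := (Finset.sum_pair hne).symm
    _ ≤ ∑ S ∈ hfin.toFinset, cyclicity N S := Finset.sum_le_sum_of_subset hsub
    _ = urk N := (finsum_mem_eq_finite_toFinset_sum _ hfin).symm

lemma urk_eq_one_of_critEdge_iff {v : Fin n} (h : ∀ i j, critEdge N i j ↔ i = v ∧ j = v) :
    urk N = 1 := by
  have hvertex : ∀ i, critVertex N i ↔ i = v := fun i =>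
    ⟨fun ⟨j, hj⟩ => hj.elim (fun hij => ((h i j).1 hij).1) (fun hji => ((h j i).1 hji).2),
      fun hi => ⟨v, .inl ((h i v).2 ⟨hi, rfl⟩)⟩⟩
  have hSCC : {S | IsSCC N S} = {{v}} := by
    ext S
    simp only [Set.mem_singleton_iff]
    constructor
    · rintro ⟨hcrit, -, hmax⟩
      exact (hmax {v} (fun i hi => (hvertex i).1 (hcrit i hi)) (by simp [hvertex])
        (by simp [ReflTransGen.refl])).symm
    · rintro rfl
      refine ⟨by simp [hvertex], by simp [ReflTransGen.refl], fun T hsub hcrit _ => ?_⟩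
      exact Set.Subset.antisymm (fun i hi => (hvertex i).1 (hcrit i hi)) hsub
  have hcyc : cyclicity N {v} = 1 :=
    Nat.dvd_one.1 (setGcd_dvd ⟨0, fun _ => v, rfl, fun _ => (h v v).2 ⟨rfl, rfl⟩, fun _ => rfl⟩)
  change ∑ᶠ S ∈ {S | IsSCC N S}, cyclicity N S = 1
  rw [hSCC, finsum_mem_singleton, hcyc]

end CriticalGraph

section Hat

variable {d : ℕ} (M : Mat d)

def hatLo (i : Fin d) : Fin (d + d + 1) := ⟨i, by omega⟩

def hatHi (i : Fin d) : Fin (d + d + 1) := ⟨d + i, by omega⟩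

def hatTop (d : ℕ) : Fin (d + d + 1) := ⟨d + d, by omega⟩

def hatBlock (i : Fin (d + d + 1)) : ℕ :=
  if (i : ℕ) < d then 0 else if (i : ℕ) < d + d then 1 else 2

lemma hat_hatLo_hatLo (i j : Fin d) : hat M (hatLo i) (hatLo j) = M i j := by
  simp [hat, hatLo]

lemma hat_hatHi_hatHi (i j : Fin d) : hat M (hatHi i) (hatHi j) = M i j := by
  simp [hat, hatHi]

lemma hat_hatTop_hatTop : hat M (hatTop d) (hatTop d) = 0 := by
  simp [hat, hatTop]

lemma hatBlock_eq_of_hat_ne_bot {i j : Fin (d + d + 1)} (h : hat M i j ≠ ⊥) :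
    hatBlock i = hatBlock j := by
  unfold hat at h
  unfold hatBlock
  split_ifs at h ⊢ <;> first | omega | exact absurd rfl h

lemma hatBlock_eq_of_reflTransGen {i j : Fin (d + d + 1)}
    (h : ReflTransGen (fun i j => hat M i j ≠ ⊥) i j) : hatBlock i = hatBlock j := by
  induction h with
  | refl => rfl
  | tail _ hjk ih => exact ih.trans (hatBlock_eq_of_hat_ne_bot M hjk)

lemma cycWeight_hatTop (ℓ : ℕ) : cycWeight (hat M) (fun _ : Fin (ℓ+1) => hatTop d) = 0 := by
  simp [cycWeight, hat_hatTop_hatTop]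

lemma hat_cycle_cases {ℓ : ℕ} (c : Fin (ℓ+1) → Fin (d + d + 1)) (hc : cycWeight (hat M) c ≠ ⊥) :
    (∃ c' : Fin (ℓ+1) → Fin d, cycWeight (hat M) c = cycWeight M c') ∨ c = fun _ => hatTop d := by
  have hblock : ∀ k, hatBlock (c k) = hatBlock (c 0) := fun k =>
    (hatBlock_eq_of_reflTransGen M
      (reflTransGen_of_cycle c (ne_bot_of_cycWeight_ne_bot (hat M) hc) 0 k)).symm
  by_cases hlo : (c 0 : ℕ) < d
  · have hlt : ∀ k, (c k : ℕ) < d := fun k => by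
      have hk := hblock k
      unfold hatBlock at hk
      split_ifs at hk
      omega
    exact .inl ⟨fun k => ⟨c k, hlt k⟩,
      cycWeight_comp M hatLo (hat_hatLo_hatLo M) (fun k => ⟨c k, hlt k⟩)⟩
  by_cases hhi : (c 0 : ℕ) < d + d
  · have hbetween : ∀ k, d ≤ (c k : ℕ) ∧ (c k : ℕ) < d + d := fun k => by
      have hk := hblock k
      unfold hatBlock at hk
      split_ifs at hk <;> omega
    refine .inl ⟨fun k => ⟨c k - d, by have := hbetween k; omega⟩, ?_⟩
    rw [← cycWeight_comp M hatHi (hat_hatHi_hatHi M)]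
    congr 1
    funext k
    exact Fin.ext (by have := hbetween k; simp only [hatHi]; omega)
  · refine .inr (funext fun k => Fin.ext ?_)
    have hk := hblock k
    have := (c k).isLt
    unfold hatBlock at hk
    simp only [hatTop]
    split_ifs at hk <;> omega

lemma rho_hat : rho (hat M) = max (rho M) 0 := by
  refine le_antisymm (rho_le _ fun ℓ c => ?_) (max_le (rho_le M fun ℓ c => ?_) ?_)
  · by_cases hc : cycWeight (hat M) c = ⊥
    · rw [hc, meanWeight_bot ℓ.succ_pos]
      exact bot_le
    rcases hat_cycle_cases M c hc with ⟨c', hc'⟩ | rfl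
    · rw [hc']
      exact le_max_of_le_left (meanWeight_le_rho M c')
    · rw [cycWeight_hatTop, meanWeight_zero]
      exact le_max_right _ _
  · rw [← cycWeight_comp M hatLo (hat_hatLo_hatLo M)]
    exact meanWeight_le_rho _ _
  · simpa [cycWeight_hatTop, meanWeight_zero] using
      meanWeight_le_rho (hat M) (fun _ : Fin 1 => hatTop d)

lemma critEdge_hat_iff_of_rho_neg (h : rho M < 0) {i j : Fin (d + d + 1)} :
    critEdge (hat M) i j ↔ i = hatTop d ∧ j = hatTop d := by
  have hrho : rho (hat M) = 0 := by rw [rho_hat, max_eq_right h.le]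
  constructor
  · rintro ⟨ℓ, c, k, ⟨hw, hmean⟩, rfl, rfl⟩
    rcases hat_cycle_cases M c hw with ⟨c', hc'⟩ | rfl
    · refine absurd ?_ (lt_irrefl (0 : EReal))
      calc (0 : EReal) = meanWeight (cycWeight M c') (ℓ+1) := by
            rw [← hc', ← hrho]
            exact hmean.symm
        _ ≤ rho M := meanWeight_le_rho M c'
        _ < 0 := h
    · exact ⟨rfl, rfl⟩
  · rintro ⟨rfl, rfl⟩
    refine ⟨0, fun _ => hatTop d, 0, ⟨?_, ?_⟩, rfl, rfl⟩
    · rw [cycWeight_hatTop]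
      exact WithBot.coe_ne_bot
    · rw [cycWeight_hatTop, hrho]
      exact meanWeight_zero 1

lemma urk_hat_of_rho_neg (h : rho M < 0) : urk (hat M) = 1 :=
  urk_eq_one_of_critEdge_iff fun _ _ => critEdge_hat_iff_of_rho_neg M h

lemma two_le_urk_hat_of_nonneg (h : 0 ≤ rho M) : 2 ≤ urk (hat M) := by
  have hrho : rho (hat M) = rho M := by rw [rho_hat, max_eq_left h]
  obtain ⟨ℓ, c, hw, hmean⟩ := exists_isCritCycle M (ne_bot_of_le_ne_bot EReal.zero_ne_bot h)
  have hlift : ∀ v : Fin d → Fin (d + d + 1), (∀ i j, hat M (v i) (v j) = M i j) →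
      IsCritCycle (hat M) (fun k => v (c k)) := fun v hv =>
    ⟨by rw [cycWeight_comp M v hv]; exact hw, by rw [cycWeight_comp M v hv, hrho]; exact hmean⟩
  refine two_le_urk_of_isCritCycle (hlift _ (hat_hatLo_hatLo M)) (hlift _ (hat_hatHi_hatHi M))
    fun hreach => ?_
  have hblock := hatBlock_eq_of_reflTransGen M
    (ReflTransGen.mono (fun _ _ => ne_bot_of_critEdge) _ _ hreach)
  simp [hatBlock, hatLo, hatHi] at hblock

end Hat

theorem stmt_10 {d : ℕ} (M : Mat d) :
    (rho M < 0 → urk (hat M) = 1) ∧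
    (0 ≤ rho M → 2 ≤ urk (hat M)) ∧
    (0 ≤ rho M ↔ 2 ≤ urk (hat M)) := by
  refine ⟨urk_hat_of_rho_neg M, two_le_urk_hat_of_nonneg M, two_le_urk_hat_of_nonneg M,
    fun h => ?_⟩
  by_contra hlt
  have := urk_hat_of_rho_neg M (not_le.1 hlt)
  omega
end

section
/- Let A be a max-plus automaton over Σ with d states (map μ, initial vector I, final vector F, weights in a set S ⊆ Z), and let ⋆ ∉ Σ. Construct A' over Σ' = Σ ∪ {⋆} with d+1 states, all initial and final, by adding a new state q and ⋆-labelled weight-0 transitions: from every final state of A to every initial state of A, from every final state of A to q, a loop on q, and from q to every initial state of A; all letters of Σ keep their transitions from A. Then for every word w ∈ Σ⁺ and every k ∈ N, [[A']]((⋆w)^k ⋆) = k · [[A]](w). -/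
open Filter

/-- The star-extension automaton `A'`: one extra state `q` (index `d`), and
`⋆`-labelled weight-0 transitions from final states to initial states, from final
states to `q`, a loop on `q`, and from `q` to initial states. -/
def starMu {α : Type} {d : ℕ} (μ : α → Mat d) (I F : Fin d → Zmax) :
    α ⊕ Unit → Mat (d + 1)
  | Sum.inl a => fun i j =>
      if hi : (i : ℕ) < d then
        if hj : (j : ℕ) < d then μ a ⟨i, hi⟩ ⟨j, hj⟩ else ⊥
      else ⊥
  | Sum.inr _ => fun i j =>
      if hi : (i : ℕ) < d then
        if hj : (j : ℕ) < d then
          (if F ⟨i, hi⟩ = 0 ∧ I ⟨j, hj⟩ = 0 then (0 : Zmax) else ⊥)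
        else (if F ⟨i, hi⟩ = 0 then (0 : Zmax) else ⊥)
      else
        if hj : (j : ℕ) < d then (if I ⟨j, hj⟩ = 0 then (0 : Zmax) else ⊥)
        else (0 : Zmax)


/-!
The `⋆`-matrix of `A'` has rank one: it is `E = F̂ ⊗ Î`, where `F̂` and `Î` are the final and
initial vectors extended by `0` at the new state `q`, while every letter of `Σ` acts by `μ`
padded with `-∞` (`tlift`). Hence `E ⊗ μ'(w) ⊗ E = [[A]](w) ⊙ E`, so by induction
`μ'((⋆w)^k⋆) = (k · [[A]](w)) ⊙ E`, and `‖E‖_∞ = 0` since all its entries are `≤ 0` and the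
loop on `q` has weight `0`.
-/

namespace WithBot

variable {α ι : Type*} [AddCommMonoid α] [LinearOrder α] [IsOrderedAddMonoid α]

lemma add_finset_sup (s : Finset ι) (f : ι → WithBot α) (c : WithBot α) :
    c + s.sup f = s.sup fun i => c + f i :=
  Finset.apply_sup_eq_sup_comp_of_linearOrder (c + ·) add_right_mono (WithBot.add_bot c)

lemma finset_sup_add (s : Finset ι) (f : ι → WithBot α) (c : WithBot α) :
    s.sup f + c = s.sup fun i => f i + c := by
  simp only [add_comm _ c, add_finset_sup]

end WithBot

lemma Fin.sup_univ_castSucc {α : Type*} [SemilatticeSup α] [OrderBot α] {n : ℕ}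
    (f : Fin (n + 1) → α) :
    Finset.univ.sup f = Finset.univ.sup (fun i : Fin n => f i.castSucc) ⊔ f (Fin.last n) := by
  rw [Fin.univ_castSuccEmb, Finset.sup_cons, Finset.sup_map, sup_comm]
  rfl

namespace MaxPlus

open WithBot

variable {d : ℕ}

lemma tmul_assoc (A B C : Mat d) : tmul (tmul A B) C = tmul A (tmul B C) := by
  funext i j
  simp only [tmul, finset_sup_add, add_finset_sup]
  rw [Finset.sup_comm]
  simp only [add_assoc]

lemma prodL_cons {M : Mat d} {L : List (Mat d)} (hL : L ≠ []) :
    prodL (M :: L) = tmul M (prodL L) := by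
  obtain ⟨N, L', rfl⟩ := List.exists_cons_of_ne_nil hL
  rfl

lemma prodL_append {L₁ L₂ : List (Mat d)} (h₁ : L₁ ≠ []) (h₂ : L₂ ≠ []) :
    prodL (L₁ ++ L₂) = tmul (prodL L₁) (prodL L₂) := by
  induction L₁ with
  | nil => contradiction
  | cons M L ih =>
    rcases eq_or_ne L [] with rfl | hL
    · exact prodL_cons h₂
    · rw [List.cons_append, prodL_cons (by simp [hL]), prodL_cons hL, tmul_assoc, ih hL]

def tsmul (c : Zmax) (M : Mat d) : Mat d := fun i j => c + M i j

lemma tmul_tsmul (c : Zmax) (A B : Mat d) : tmul A (tsmul c B) = tsmul c (tmul A B) := by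
  funext i j
  simp only [tmul, tsmul, add_finset_sup, add_left_comm]

lemma tsmul_tsmul (a b : Zmax) (M : Mat d) : tsmul a (tsmul b M) = tsmul (a + b) M := by
  funext i j
  simp only [tsmul, add_assoc]

lemma tnorm_tsmul (c : Zmax) (M : Mat d) : tnorm (tsmul c M) = c + tnorm M := by
  simp only [tnorm, tsmul, add_finset_sup]

def outer (u v : Fin d → Zmax) : Mat d := fun i j => u i + v j

lemma tnorm_outer (u v : Fin d → Zmax) :
    tnorm (outer u v) = Finset.univ.sup u + Finset.univ.sup v := by
  rw [finset_sup_add]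
  simp only [tnorm, outer, add_finset_sup]

lemma outer_tmul_tmul_outer (u v u' v' : Fin d → Zmax) (M : Mat d) :
    tmul (outer u v) (tmul M (outer u' v')) = tsmul (runVal v M u') (outer u v') := by
  funext i j
  simp only [tmul, outer, tsmul, runVal, finset_sup_add, add_finset_sup]
  congr 1; funext k; congr 1; funext l
  abel

lemma prodL_replicate_append {E : Mat d} {Ws : List (Mat d)} {r : Zmax} (hWs : Ws ≠ [])
    (hE : tmul E (tmul (prodL Ws) E) = tsmul r E) (k : ℕ) :
    prodL ((List.replicate k (E :: Ws)).flatten ++ [E]) = tsmul (k • r) E := by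
  induction k with
  | zero => funext i j; simp [prodL, tsmul]
  | succ k ih =>
    rw [List.replicate_succ, List.flatten_cons, List.append_assoc, List.cons_append,
      prodL_cons (by simp), prodL_append hWs (by simp), ih, tmul_tsmul, tmul_tsmul, hE,
      tsmul_tsmul, succ_nsmul]

def tlift (M : Mat d) : Mat (d + 1) := fun i j =>
  if hi : (i : ℕ) < d then if hj : (j : ℕ) < d then M ⟨i, hi⟩ ⟨j, hj⟩ else ⊥ else ⊥

@[simp] lemma tlift_castSucc (M : Mat d) (i j : Fin d) :
    tlift M i.castSucc j.castSucc = M i j := by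
  simp [tlift]

@[simp] lemma tlift_last_left (M : Mat d) (j : Fin (d + 1)) : tlift M (Fin.last d) j = ⊥ := by
  simp [tlift]

@[simp] lemma tlift_last_right (M : Mat d) (i : Fin (d + 1)) : tlift M i (Fin.last d) = ⊥ := by
  simp [tlift]

lemma tlift_tmul (A B : Mat d) : tmul (tlift A) (tlift B) = tlift (tmul A B) := by
  funext i j
  induction i using Fin.lastCases <;> induction j using Fin.lastCases <;>
    simp [tmul, Fin.sup_univ_castSucc]

lemma prodL_map_tlift {L : List (Mat d)} (hL : L ≠ []) :
    prodL (L.map tlift) = tlift (prodL L) := by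
  induction L with
  | nil => contradiction
  | cons M L ih =>
    rcases eq_or_ne L [] with rfl | hL'
    · rfl
    · rw [List.map_cons, prodL_cons (by simpa using hL'), ih hL', prodL_cons hL', tlift_tmul]

lemma runVal_snoc_tlift (v u : Fin d → Zmax) (M : Mat d) :
    runVal (Fin.snoc v 0) (tlift M) (Fin.snoc u 0) = runVal v M u := by
  simp [runVal, Fin.sup_univ_castSucc]

lemma starMu_inl {α : Type} (μ : α → Mat d) (I F : Fin d → Zmax) (a : α) :
    starMu μ I F (Sum.inl a) = tlift (μ a) :=
  rfl

lemma starMu_inr_eq_outer {α : Type} (μ : α → Mat d) {I F : Fin d → Zmax}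
    (hI : ∀ i, I i = 0 ∨ I i = ⊥) (hF : ∀ i, F i = 0 ∨ F i = ⊥) :
    starMu μ I F (Sum.inr ()) = outer (Fin.snoc F 0) (Fin.snoc I 0) := by
  funext i j
  induction i using Fin.lastCases with
  | last => induction j using Fin.lastCases with
    | last => simp [starMu, outer]
    | cast j => rcases hI j with h | h <;> simp [starMu, outer, h]
  | cast i => induction j using Fin.lastCases with
    | last => rcases hF i with h | h <;> simp [starMu, outer, h]
    | cast j => rcases hI j with h | h <;> rcases hF i with h' | h' <;> simp [starMu, outer, h, h']

lemma sup_snoc_zero {v : Fin d → Zmax} (hv : ∀ i, v i = 0 ∨ v i = ⊥) :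
    Finset.univ.sup (Fin.snoc v 0 : Fin (d + 1) → Zmax) = 0 := by
  rw [Fin.sup_univ_castSucc, Fin.snoc_last, sup_eq_right, Finset.sup_le_iff]
  intro i _
  rcases hv i with h | h <;> simp [h]

end MaxPlus

open MaxPlus in
theorem stmt_15 {α : Type} {d : ℕ} (μ : α → Mat d) (I F : Fin d → Zmax)
    (hI : ∀ i, I i = 0 ∨ I i = ⊥) (hF : ∀ i, F i = 0 ∨ F i = ⊥) :
    ∀ (w : List α) (k : ℕ), w ≠ [] →
      tnorm (prodL ((((List.replicate k (Sum.inr () :: w.map Sum.inl)).flatten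
          ++ [Sum.inr ()])).map (starMu μ I F))) =
        k • runVal I (prodL (w.map μ)) F := by
  intro w k hw
  have hw' : w.map μ ≠ [] := by simpa using hw
  have hE := starMu_inr_eq_outer μ hI hF
  have hletters : (w.map Sum.inl).map (starMu μ I F) = (w.map μ).map tlift := by
    simp only [List.map_map, Function.comp_def, starMu_inl]
  have hblock : tmul (starMu μ I F (Sum.inr ()))
      (tmul (prodL ((w.map μ).map tlift)) (starMu μ I F (Sum.inr ()))) =
      tsmul (runVal I (prodL (w.map μ)) F) (starMu μ I F (Sum.inr ())) := by
    rw [prodL_map_tlift hw', hE, outer_tmul_tmul_outer, runVal_snoc_tlift]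
  simp only [List.map_append, List.map_flatten, List.map_replicate, List.map_cons, List.map_nil,
    hletters]
  rw [prodL_replicate_append (by simpa using hw') hblock, tnorm_tsmul, hE, tnorm_outer,
    sup_snoc_zero hF, sup_snoc_zero hI, add_zero, add_zero]
end

section
/- Let Γ be a finite set of d×d matrices over Z_max with entries in {0, -∞}, and let Γ' be obtained by replacing every -∞ entry by -1. Then ρ(Γ) = 0 if and only if ρ(Γ') = 0; moreover if ρ(Γ) ≠ 0 then ρ(Γ) = -∞ and ρ(Γ') < 0. -/
open Filter

/-! Entries of a product of `{0, -∞}`-matrices are `0` or `-∞`, and for matrices with nonpositive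
entries the zero entries of a product are governed by the Boolean product of the zero patterns
of the factors. Replacing `-∞` by `-1` keeps entries nonpositive and does not change the zero
pattern, so a product from `Γ` has norm `0` exactly when the corresponding product from `Γ'` has
norm `0`; otherwise the former has norm `-∞` and the latter a negative norm. A single product
bounds the joint spectral radius from above, and `0` bounds it from below once all products have
norm `0`. -/

theorem List.exists_map_eq_of_forall_mem_image {α β : Type*} {f : α → β} {s : Set α}
    {l' : List β} (h : ∀ y ∈ l', y ∈ f '' s) : ∃ l : List α, (∀ x ∈ l, x ∈ s) ∧ l.map f = l' := by
  induction l' with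
  | nil => exact ⟨[], by simp, rfl⟩
  | cons y l' ih =>
    obtain ⟨l, hls, rfl⟩ := ih fun z hz => h z (List.mem_cons_of_mem y hz)
    obtain ⟨x, hxs, rfl⟩ := h y List.mem_cons_self
    exact ⟨x :: l, by simpa using ⟨hxs, hls⟩, rfl⟩

section Products

variable {d : ℕ}

theorem prodL_map_induction (p : Mat d → Mat d → Prop) (f : Mat d → Mat d)
    (hmul : ∀ A A' B B', p A A' → p B B' → p (tmul A B) (tmul A' B')) :
    ∀ L : List (Mat d), L ≠ [] → (∀ M ∈ L, p M (f M)) → p (prodL L) (prodL (L.map f))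
  | [], hL, _ => absurd rfl hL
  | [M], _, hp => hp M List.mem_cons_self
  | M :: N :: L, _, hp =>
    hmul _ _ _ _ (hp M List.mem_cons_self)
      (prodL_map_induction p f hmul (N :: L) (List.cons_ne_nil N L)
        fun K hK => hp K (List.mem_cons_of_mem M hK))

theorem prodL_induction (p : Mat d → Prop) (hmul : ∀ A B, p A → p B → p (tmul A B))
    (L : List (Mat d)) (hL : L ≠ []) (hp : ∀ M ∈ L, p M) : p (prodL L) := by
  simpa using prodL_map_induction (fun A _ => p A) id (fun A _ B _ => hmul A B) L hL hp

theorem sup_eq_zero_or_bot {ι : Type*} (s : Finset ι) {g : ι → Zmax}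
    (hg : ∀ k ∈ s, g k = 0 ∨ g k = ⊥) : s.sup g = 0 ∨ s.sup g = ⊥ :=
  Finset.sup_induction (p := fun x => x = 0 ∨ x = ⊥) (Or.inr rfl)
    (by rintro _ (rfl | rfl) _ (rfl | rfl) <;> simp) hg

theorem zero_le_sup_iff {ι : Type*} (s : Finset ι) (g : ι → Zmax) :
    0 ≤ s.sup g ↔ ∃ k ∈ s, 0 ≤ g k :=
  Finset.le_sup_iff (WithBot.bot_lt_coe 0)

theorem tmul_eq_zero_or_bot {A B : Mat d} (hA : ∀ i j, A i j = 0 ∨ A i j = ⊥)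
    (hB : ∀ i j, B i j = 0 ∨ B i j = ⊥) (i j : Fin d) :
    tmul A B i j = 0 ∨ tmul A B i j = ⊥ :=
  sup_eq_zero_or_bot _ fun k _ => by
    rcases hA i k with h | h <;> rcases hB k j with h' | h' <;> simp [h, h']

theorem tnorm_eq_zero_or_bot {M : Mat d} (hM : ∀ i j, M i j = 0 ∨ M i j = ⊥) :
    tnorm M = 0 ∨ tnorm M = ⊥ :=
  sup_eq_zero_or_bot _ fun i _ => sup_eq_zero_or_bot _ fun j _ => hM i j

theorem tmul_nonpos {A B : Mat d} (hA : A ≤ 0) (hB : B ≤ 0) : tmul A B ≤ 0 :=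
  fun i j => Finset.sup_le fun k _ => add_nonpos (hA i k) (hB k j)

theorem zero_le_tmul_iff {A B : Mat d} (hA : A ≤ 0) (hB : B ≤ 0) (i j : Fin d) :
    0 ≤ tmul A B i j ↔ ∃ k, 0 ≤ A i k ∧ 0 ≤ B k j := by
  simp only [tmul, zero_le_sup_iff, Finset.mem_univ, true_and]
  refine exists_congr fun k => ⟨fun h => ?_, fun h => add_nonneg h.1 h.2⟩
  exact ⟨(eq_zero_of_add_nonneg_left (hA i k) (hB k j) h).ge,
    (eq_zero_of_add_nonneg_right (hA i k) (hB k j) h).ge⟩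

theorem zero_le_tnorm_iff {M : Mat d} : 0 ≤ tnorm M ↔ ∃ i j, 0 ≤ M i j := by
  simp only [tnorm, zero_le_sup_iff, Finset.mem_univ, true_and]

/-- For a nonpositive entry `x`, `0 ≤ x` means `x = 0`. -/
def SameZeroPattern (A A' : Mat d) : Prop :=
  A ≤ 0 ∧ A' ≤ 0 ∧ ∀ i j, 0 ≤ A i j ↔ 0 ≤ A' i j

theorem SameZeroPattern.tmul {A A' B B' : Mat d} (hA : SameZeroPattern A A')
    (hB : SameZeroPattern B B') : SameZeroPattern (tmul A B) (tmul A' B') := by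
  refine ⟨tmul_nonpos hA.1 hB.1, tmul_nonpos hA.2.1 hB.2.1, fun i j => ?_⟩
  rw [zero_le_tmul_iff hA.1 hB.1, zero_le_tmul_iff hA.2.1 hB.2.1]
  exact exists_congr fun k => and_congr (hA.2.2 i k) (hB.2.2 k j)

end Products

def botToNegOne {d : ℕ} (M : Mat d) : Mat d :=
  fun i j => if M i j = ⊥ then ((-1 : ℤ) : Zmax) else M i j

theorem sameZeroPattern_botToNegOne {d : ℕ} {M : Mat d} (hM : ∀ i j, M i j = 0 ∨ M i j = ⊥) :
    SameZeroPattern M (botToNegOne M) := by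
  refine ⟨fun i j => ?_, fun i j => ?_, fun i j => ?_⟩ <;>
    rcases hM i j with h | h <;> simp [botToNegOne, h]

theorem tnorm_prodL_botToNegOne {d : ℕ} (L : List (Mat d)) (hL : L ≠ [])
    (hM : ∀ M ∈ L, ∀ i j, M i j = 0 ∨ M i j = ⊥) :
    (tnorm (prodL L) = 0 ∧ tnorm (prodL (L.map botToNegOne)) = 0) ∨
      (tnorm (prodL L) = ⊥ ∧ tnorm (prodL (L.map botToNegOne)) < 0) := by
  have hzb := prodL_induction (fun A => ∀ i j, A i j = 0 ∨ A i j = ⊥)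
    (fun _ _ => tmul_eq_zero_or_bot) L hL hM
  have hpat := prodL_map_induction SameZeroPattern botToNegOne
    (fun _ _ _ _ => SameZeroPattern.tmul) L hL fun M hm => sameZeroPattern_botToNegOne (hM M hm)
  have hiff : 0 ≤ tnorm (prodL L) ↔ 0 ≤ tnorm (prodL (L.map botToNegOne)) := by
    simp only [zero_le_tnorm_iff, hpat.2.2]
  have hnonpos : tnorm (prodL (L.map botToNegOne)) ≤ 0 :=
    Finset.sup_le fun i _ => Finset.sup_le fun j _ => hpat.2.1 i j
  rcases tnorm_eq_zero_or_bot hzb with h | h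
  · exact Or.inl ⟨h, le_antisymm hnonpos (hiff.1 h.ge)⟩
  · refine Or.inr ⟨h, hnonpos.lt_of_ne fun h' => ?_⟩
    simpa [h] using hiff.2 h'.ge

section SpectralRadius

variable {d : ℕ} {Γ : Set (Mat d)} {L : List (Mat d)}

theorem jsr_le_of_prodL (hL : L ≠ []) (hLΓ : ∀ M ∈ L, M ∈ Γ) :
    jsr Γ ≤ z2e (tnorm (prodL L)) / (L.length : EReal) :=
  (iInf₂_le L.length (List.length_pos_iff.mpr hL)).trans (sInf_le ⟨L, rfl, hLΓ, rfl⟩)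

theorem jsr_eq_bot_of_tnorm_eq_bot (hL : L ≠ []) (hLΓ : ∀ M ∈ L, M ∈ Γ)
    (h : tnorm (prodL L) = ⊥) : jsr Γ = ⊥ := by
  have hpos : (0 : EReal) < L.length := by exact_mod_cast List.length_pos_iff.mpr hL
  refine le_bot_iff.mp ((jsr_le_of_prodL hL hLΓ).trans ?_)
  rw [h, show z2e ⊥ = ⊥ from rfl, EReal.bot_div_of_pos_ne_top hpos (EReal.natCast_ne_top _)]

theorem jsr_neg_of_tnorm_neg (hL : L ≠ []) (hLΓ : ∀ M ∈ L, M ∈ Γ)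
    (h : tnorm (prodL L) < 0) : jsr Γ < 0 := by
  have hpos : (0 : EReal) < L.length := by exact_mod_cast List.length_pos_iff.mpr hL
  have hz : z2e (tnorm (prodL L)) < 0 := by
    induction hx : tnorm (prodL L) using WithBot.recBotCoe with
    | bot => exact EReal.bot_lt_zero
    | coe n =>
      rw [hx] at h
      simpa [z2e] using (WithBot.coe_lt_coe.mp h : n < 0)
  calc jsr Γ ≤ z2e (tnorm (prodL L)) / (L.length : EReal) := jsr_le_of_prodL hL hLΓ
    _ < 0 / (L.length : EReal) :=
      EReal.div_lt_div_right_of_pos hpos (EReal.natCast_ne_top _) hz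
    _ = 0 := EReal.zero_div

theorem jsr_eq_zero_of_forall_tnorm_eq_zero (hne : Γ.Nonempty)
    (h : ∀ L : List (Mat d), L ≠ [] → (∀ M ∈ L, M ∈ Γ) → tnorm (prodL L) = 0) : jsr Γ = 0 := by
  have hz : z2e 0 = 0 := by
    change (((0 : ℤ) : ℝ) : EReal) = 0
    simp
  obtain ⟨M, hM⟩ := hne
  refine le_antisymm ?_ (le_iInf₂ fun ℓ hℓ => le_sInf ?_)
  · simpa [h [M] (List.cons_ne_nil M []) (by simpa using hM), hz] using
      jsr_le_of_prodL (Γ := Γ) (List.cons_ne_nil M []) (by simpa using hM)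
  · rintro _ ⟨L, rfl, hLΓ, rfl⟩
    rw [h L (List.ne_nil_of_length_pos hℓ) hLΓ, hz, EReal.zero_div]

end SpectralRadius

theorem jsr_image_botToNegOne_eq_zero {d : ℕ} {Γ : Set (Mat d)} (hne : Γ.Nonempty)
    (hΓ : ∀ M ∈ Γ, ∀ i j, M i j = 0 ∨ M i j = ⊥)
    (hzero : ∀ L : List (Mat d), L ≠ [] → (∀ M ∈ L, M ∈ Γ) → tnorm (prodL L) = 0) :
    jsr (botToNegOne '' Γ) = 0 := by
  refine jsr_eq_zero_of_forall_tnorm_eq_zero (hne.image _) fun L' hL' hL'Γ => ?_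
  obtain ⟨L, hLΓ, rfl⟩ := List.exists_map_eq_of_forall_mem_image hL'Γ
  have hL : L ≠ [] := by rintro rfl; exact hL' rfl
  obtain ⟨-, h⟩ | ⟨h, -⟩ := tnorm_prodL_botToNegOne L hL fun M hM => hΓ M (hLΓ M hM)
  · exact h
  · simp [hzero L hL hLΓ] at h

theorem stmt_17_general {d : ℕ} (Γ : Set (Mat d)) (hne : Γ.Nonempty)
    (hΓ : ∀ M ∈ Γ, ∀ i j, M i j = 0 ∨ M i j = ⊥) :
    (jsr Γ = 0 ↔
      jsr ((fun M : Mat d => fun i j =>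
        if M i j = ⊥ then ((-1 : ℤ) : Zmax) else M i j) '' Γ) = 0) ∧
    (jsr Γ ≠ 0 → jsr Γ = ⊥ ∧
      jsr ((fun M : Mat d => fun i j =>
        if M i j = ⊥ then ((-1 : ℤ) : Zmax) else M i j) '' Γ) < 0) := by
  change (jsr Γ = 0 ↔ jsr (botToNegOne '' Γ) = 0) ∧
    (jsr Γ ≠ 0 → jsr Γ = ⊥ ∧ jsr (botToNegOne '' Γ) < 0)
  by_cases hzero : ∀ L : List (Mat d), L ≠ [] → (∀ M ∈ L, M ∈ Γ) → tnorm (prodL L) = 0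
  · simp [jsr_eq_zero_of_forall_tnorm_eq_zero hne hzero,
      jsr_image_botToNegOne_eq_zero hne hΓ hzero]
  push Not at hzero
  obtain ⟨L, hL, hLΓ, hnz⟩ := hzero
  obtain ⟨h, -⟩ | ⟨hbot, hneg⟩ := tnorm_prodL_botToNegOne L hL fun M hM => hΓ M (hLΓ M hM)
  · exact absurd h hnz
  have hjsr : jsr Γ = ⊥ := jsr_eq_bot_of_tnorm_eq_bot hL hLΓ hbot
  have hjsr' : jsr (botToNegOne '' Γ) < 0 :=
    jsr_neg_of_tnorm_neg (by simpa using hL)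
      (List.forall_mem_map.2 fun M hM => Set.mem_image_of_mem _ (hLΓ M hM)) hneg
  exact ⟨iff_of_false (by simp [hjsr]) hjsr'.ne, fun _ => ⟨hjsr, hjsr'⟩⟩

theorem stmt_17 {d : ℕ} (Γ : Set (Mat d)) (hfin : Γ.Finite) (hne : Γ.Nonempty)
    (hΓ : ∀ M ∈ Γ, ∀ i j, M i j = 0 ∨ M i j = ⊥) :
    (jsr Γ = 0 ↔
      jsr ((fun M : Mat d => fun i j =>
        if M i j = ⊥ then ((-1 : ℤ) : Zmax) else M i j) '' Γ) = 0) ∧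
    (jsr Γ ≠ 0 → jsr Γ = ⊥ ∧
      jsr ((fun M : Mat d => fun i j =>
        if M i j = ⊥ then ((-1 : ℤ) : Zmax) else M i j) '' Γ) < 0) :=
  stmt_17_general Γ hne hΓ
end
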